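/- arXiv:2009.05256 — 2 statements merged into one kernel-verified Lean document; each statement's English description precedes it below -/
import Mathlib

section
/- Define f₁(a₁,b₁,a₂,b₂) = min{a₁, 1/2−a₁, b₁, 1/2−b₁} + min{a₂, 1/2−a₂, b₂, 1/2−b₂} and f₂(a₁,b₁,a₂,b₂) = |a₁−a₂| + |b₁−b₂|, for real numbers a₁,b₁,a₂,b₂ ∈ [0,1/2]. Then min{f₁(x), f₂(x)} ≤ 1/3 for every x = (a₁,b₁,a₂,b₂) ∈ [0,1/2]⁴. -/
/-- Cost function `f₁` from the pipe equator estimate. -/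
noncomputable def f1 (a₁ b₁ a₂ b₂ : ℝ) : ℝ :=
  min (min a₁ (1/2 - a₁)) (min b₁ (1/2 - b₁)) +
    min (min a₂ (1/2 - a₂)) (min b₂ (1/2 - b₂))

/-- Cost function `f₂` from the pipe equator estimate. -/
noncomputable def f2 (a₁ b₁ a₂ b₂ : ℝ) : ℝ := |a₁ - a₂| + |b₁ - b₂|

theorem stmt_0 (a₁ b₁ a₂ b₂ : ℝ)
    (ha₁ : a₁ ∈ Set.Icc (0:ℝ) (1/2)) (hb₁ : b₁ ∈ Set.Icc (0:ℝ) (1/2))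
    (ha₂ : a₂ ∈ Set.Icc (0:ℝ) (1/2)) (hb₂ : b₂ ∈ Set.Icc (0:ℝ) (1/2)) :
    min (f1 a₁ b₁ a₂ b₂) (f2 a₁ b₁ a₂ b₂) ≤ 1/3 := by
  rcases le_or_gt (f2 a₁ b₁ a₂ b₂) (1/3) with h | h
  · exact le_trans (min_le_right _ _) h
  · refine le_trans (min_le_left _ _) ?_
    have h1 : min (min a₁ (1/2 - a₁)) (min b₁ (1/2 - b₁)) ≤ a₁ :=
      le_trans (min_le_left _ _) (min_le_left _ _)
    have h2 : min (min a₁ (1/2 - a₁)) (min b₁ (1/2 - b₁)) ≤ 1/2 - a₁ :=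
      le_trans (min_le_left _ _) (min_le_right _ _)
    have h3 : min (min a₂ (1/2 - a₂)) (min b₂ (1/2 - b₂)) ≤ a₂ :=
      le_trans (min_le_left _ _) (min_le_left _ _)
    have h4 : min (min a₂ (1/2 - a₂)) (min b₂ (1/2 - b₂)) ≤ 1/2 - a₂ :=
      le_trans (min_le_left _ _) (min_le_right _ _)
    have h5 : min (min a₁ (1/2 - a₁)) (min b₁ (1/2 - b₁)) ≤ b₁ :=
      le_trans (min_le_right _ _) (min_le_left _ _)
    have h6 : min (min a₁ (1/2 - a₁)) (min b₁ (1/2 - b₁)) ≤ 1/2 - b₁ :=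
      le_trans (min_le_right _ _) (min_le_right _ _)
    have h7 : min (min a₂ (1/2 - a₂)) (min b₂ (1/2 - b₂)) ≤ b₂ :=
      le_trans (min_le_right _ _) (min_le_left _ _)
    have h8 : min (min a₂ (1/2 - a₂)) (min b₂ (1/2 - b₂)) ≤ 1/2 - b₂ :=
      le_trans (min_le_right _ _) (min_le_right _ _)
    have hf2 := h
    simp only [f1, f2] at *
    rcases le_total a₁ a₂ with ha | ha <;> rcases le_total b₁ b₂ with hb | hb
    · rw [abs_of_nonpos (by linarith), abs_of_nonpos (by linarith)] at hf2; linarith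
    · rw [abs_of_nonpos (by linarith), abs_of_nonneg (by linarith)] at hf2; linarith
    · rw [abs_of_nonneg (by linarith), abs_of_nonpos (by linarith)] at hf2; linarith
    · rw [abs_of_nonneg (by linarith), abs_of_nonneg (by linarith)] at hf2; linarith
end

section
/- With f₁, f₂ as above and F = min{f₁, f₂}, the value F(1/3, 1/3, 1/6, 1/6) equals 1/3; hence the maximum of F over [0,1/2]⁴ equals 1/3 and is attained at (1/3, 1/3, 1/6, 1/6). -/
/-- `F = min {f₁, f₂}` on the cube `[0,1/2]⁴`. -/
noncomputable def Fcost (a₁ b₁ a₂ b₂ : ℝ) : ℝ := min (f1 a₁ b₁ a₂ b₂) (f2 a₁ b₁ a₂ b₂)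

lemma key (x y : ℝ) : min x (1/2 - x) + min y (1/2 - y) + |x - y| ≤ 1/2 := by
  rcases le_total x y with h | h
  · rw [abs_of_nonpos (by linarith)]
    have h1 : min x (1/2 - x) ≤ x := min_le_left _ _
    have h2 : min y (1/2 - y) ≤ 1/2 - y := min_le_right _ _
    linarith
  · rw [abs_of_nonneg (by linarith)]
    have h1 : min x (1/2 - x) ≤ 1/2 - x := min_le_right _ _
    have h2 : min y (1/2 - y) ≤ y := min_le_left _ _
    linarith

lemma Fval : Fcost (1/3) (1/3) (1/6) (1/6) = 1/3 := by
  unfold Fcost f1 f2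
  norm_num [abs_of_nonneg]

/-- `F(1/3,1/3,1/6,1/6) = 1/3`, and this is the maximum of `F` over `[0,1/2]⁴`. -/
theorem stmt_1 :
    Fcost (1/3) (1/3) (1/6) (1/6) = 1/3 ∧
    IsGreatest {v : ℝ | ∃ a₁ ∈ Set.Icc (0:ℝ) (1/2), ∃ b₁ ∈ Set.Icc (0:ℝ) (1/2),
      ∃ a₂ ∈ Set.Icc (0:ℝ) (1/2), ∃ b₂ ∈ Set.Icc (0:ℝ) (1/2),
      v = Fcost a₁ b₁ a₂ b₂} (1/3) := by
  refine ⟨Fval, ⟨⟨1/3, by norm_num, 1/3, by norm_num, 1/6, by norm_num, 1/6, by norm_num,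
    Fval.symm⟩, ?_⟩⟩
  rintro v ⟨a₁, _, b₁, _, a₂, _, b₂, _, rfl⟩
  have ha : min (min a₁ (1/2 - a₁)) (min b₁ (1/2 - b₁)) ≤ min a₁ (1/2 - a₁) := min_le_left _ _
  have hb : min (min a₁ (1/2 - a₁)) (min b₁ (1/2 - b₁)) ≤ min b₁ (1/2 - b₁) := min_le_right _ _
  have ha2 : min (min a₂ (1/2 - a₂)) (min b₂ (1/2 - b₂)) ≤ min a₂ (1/2 - a₂) := min_le_left _ _
  have hb2 : min (min a₂ (1/2 - a₂)) (min b₂ (1/2 - b₂)) ≤ min b₂ (1/2 - b₂) := min_le_right _ _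
  have k1 := key a₁ a₂
  have k2 := key b₁ b₂
  have hsum : 2 * f1 a₁ b₁ a₂ b₂ + f2 a₁ b₁ a₂ b₂ ≤ 1 := by
    unfold f1 f2; linarith
  have h1 : f1 a₁ b₁ a₂ b₂ ≤ 1/3 ∨ f2 a₁ b₁ a₂ b₂ ≤ 1/3 := by
    by_contra h
    push_neg at h
    linarith [h.1, h.2]
  rcases h1 with h | h
  · exact le_trans (min_le_left _ _) h
  · exact le_trans (min_le_right _ _) h
end
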